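/- arXiv:1402.3113 — 3 statements merged into one kernel-verified Lean document; each statement's English description precedes it below -/
import Mathlib

section
/- Fix s>1, h>0 and an open set U ⊆ ℝ^d, and let φ ∈ D^{(s)}_{L^∞,h}(U). Then for every ε>0 there exist a compact set K ⊂ U and k ∈ ℤ₊ such that sup_{α∈ℕ^d} sup_{x∈U\K} h^{|α|}|D^αφ(x)|/α!^s ≤ ε and sup_{|α|≥k} h^{|α|}‖D^αφ‖_{L^∞(U)}/α!^s ≤ ε. -/
open MeasureTheory Filter Set
open scoped BigOperators ENNReal NNReal Topology

noncomputable section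

/-- The order `|α|` of a multi-index `α`. -/
def mOrder {d : ℕ} (α : Fin d → ℕ) : ℕ := ∑ i, α i

/-- The factorial `α!` of a multi-index `α`. -/
def mFact {d : ℕ} (α : Fin d → ℕ) : ℕ := ∏ i, Nat.factorial (α i)

variable {d : ℕ} {F : Type*} [NormedAddCommGroup F] [NormedSpace ℝ F]

/-- First-order partial derivative `∂_i`. -/
def pd (i : Fin d) (f : (Fin d → ℝ) → F) : (Fin d → ℝ) → F :=
  fun x => fderiv ℝ f x (Pi.single i 1)

/-- Iterated partial derivative `∂_i^n`. -/
def pdPow (i : Fin d) : ℕ → ((Fin d → ℝ) → F) → ((Fin d → ℝ) → F)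
  | 0 => id
  | n + 1 => fun f => pd i (pdPow i n f)

/-- Iterated partial derivative `∂^α` for a multi-index `α`. -/
def pdm (α : Fin d → ℕ) (f : (Fin d → ℝ) → F) : (Fin d → ℝ) → F :=
  (List.finRange d).foldr (fun i g => pdPow i (α i) g) f

/-- The operator `D^α = i^{-|α|} ∂^α` for complex-valued functions. -/
def Dm (α : Fin d → ℕ) (f : (Fin d → ℝ) → ℂ) : (Fin d → ℝ) → ℂ :=
  fun x => (-Complex.I) ^ (mOrder α) * pdm α f x

/-- `φ` is a Beurling–Gevrey test function of class `(s)` on `U`. -/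
def IsGevreyTest (s : ℝ) (U : Set (Fin d → ℝ)) (φ : (Fin d → ℝ) → F) : Prop :=
  ContDiff ℝ (⊤ : ℕ∞) φ ∧ HasCompactSupport φ ∧ tsupport φ ⊆ U ∧
    ∀ h : ℝ, 0 < h → ∃ C : ℝ, ∀ (α : Fin d → ℕ) (x : Fin d → ℝ),
      ‖pdm α φ x‖ ≤ C * h ^ (mOrder α) * (mFact α : ℝ) ^ s

/-- The `ℓ^p`-type norm of a family of extended reals (sup for `p = ∞`). -/
def seqLpNorm {ι : Type*} (p : ℝ≥0∞) (w : ι → ℝ≥0∞) : ℝ≥0∞ :=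
  if p = ∞ then ⨆ i, w i else (∑' i, (w i) ^ p.toReal) ^ (1 / p.toReal)

/-- The norm of the space `D^s_{L^p,h}(U)`:
`(∑_α h^{p|α|} ‖D^α φ‖_{L^p(U)}^p / α!^{ps})^{1/p}` (sup over `α` when `p = ∞`). -/
def gNorm (s h : ℝ) (p : ℝ≥0∞) (U : Set (Fin d → ℝ)) (φ : (Fin d → ℝ) → F) : ℝ≥0∞ :=
  seqLpNorm p (fun α : Fin d → ℕ =>
    ENNReal.ofReal (h ^ (mOrder α) / (mFact α : ℝ) ^ s) *
      eLpNorm (pdm α φ) p (volume.restrict U))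

/-- Membership in `D^{(s)}_{L^p,h}(U)`, the closure of `D^{(s)}(U)` in `D^s_{L^p,h}(U)`. -/
def MemD (s h : ℝ) (p : ℝ≥0∞) (U : Set (Fin d → ℝ)) (φ : (Fin d → ℝ) → F) : Prop :=
  ContDiffOn ℝ (⊤ : ℕ∞) φ U ∧ gNorm s h p U φ < ⊤ ∧
    ∀ ε : ℝ, 0 < ε → ∃ ψ : (Fin d → ℝ) → F, IsGevreyTest s U ψ ∧
      gNorm s h p U (φ - ψ) < ENNReal.ofReal ε

/-- Membership in `Ḃ^{(s)}(U)`, the closure of `D^{(s)}(U)` with respect to the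
family of norms `p_h`, `h > 0` (the norms being directed, closure with respect to the
whole family amounts to approximability in each norm separately). -/
def MemBdot (s : ℝ) (U : Set (Fin d → ℝ)) (φ : (Fin d → ℝ) → F) : Prop :=
  ContDiffOn ℝ (⊤ : ℕ∞) φ U ∧ (∀ h : ℝ, 0 < h → gNorm s h ∞ U φ < ⊤) ∧
    ∀ h ε : ℝ, 0 < h → 0 < ε → ∃ ψ : (Fin d → ℝ) → F, IsGevreyTest s U ψ ∧
      gNorm s h ∞ U (φ - ψ) < ENNReal.ofReal ε

/-- A continuous linear functional on the Banach space `D^{(s)}_{L^q,h}(U)`. -/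
def IsDualD (s h : ℝ) (q : ℝ≥0∞) (U : Set (Fin d → ℝ)) (T : ((Fin d → ℝ) → ℂ) → ℂ) : Prop :=
  (∀ φ ψ, MemD s h q U φ → MemD s h q U ψ → T (φ + ψ) = T φ + T ψ) ∧
  (∀ (c : ℂ) (φ), MemD s h q U φ → T (c • φ) = c * T φ) ∧
  ∃ M : ℝ, ∀ φ, MemD s h q U φ → ‖T φ‖ ≤ M * (gNorm s h q U φ).toReal

/-- A continuous linear map from `Ḃ^{(s)}(U)` into a Banach space `E` (over `ℂ`). -/
def IsContLinBdot (s : ℝ) (U : Set (Fin d → ℝ)) {E : Type*} [NormedAddCommGroup E]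
    [NormedSpace ℂ E] (f : ((Fin d → ℝ) → ℂ) → E) : Prop :=
  (∀ φ ψ, MemBdot s U φ → MemBdot s U ψ → f (φ + ψ) = f φ + f ψ) ∧
  (∀ (c : ℂ) (φ), MemBdot s U φ → f (c • φ) = c • f φ) ∧
  ∃ h M : ℝ, 0 < h ∧ ∀ φ, MemBdot s U φ → ‖f φ‖ ≤ M * (gNorm s h ∞ U φ).toReal

/-! Approximate `φ` within `ε/2` in the `D^s_{L^∞,h}(U)` norm by a test function `ψ`. Since the
derivatives of `φ - ψ` are continuous on the open set `U`, the essential-sup norm bounds them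
pointwise by `ε/2`. Off the compact set `K = tsupport ψ` the derivatives of `ψ` vanish, which gives
the first estimate; the Beurling bound for `ψ` with constant `1/(2h)` makes its weighted
derivatives decay like `2^{-|α|}`, which gives the second for `|α|` large. -/

section PartialDerivatives

variable {d : ℕ} {F : Type*} [NormedAddCommGroup F] [NormedSpace ℝ F]

theorem pd_zero (i : Fin d) : pd i (0 : (Fin d → ℝ) → F) = 0 := by
  funext x
  simp [pd]

theorem eqOn_pd_of_eqOn {V : Set (Fin d → ℝ)} (hV : IsOpen V) {f g : (Fin d → ℝ) → F}
    (hfg : EqOn f g V) (i : Fin d) : EqOn (pd i f) (pd i g) V := fun x hx => by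
  have hfg_nhds : f =ᶠ[𝓝 x] g := eventually_of_mem (hV.mem_nhds hx) hfg
  simp only [pd, hfg_nhds.fderiv_eq]

theorem ContDiffOn.pd {U : Set (Fin d → ℝ)} (hU : IsOpen U) {f : (Fin d → ℝ) → F}
    (hf : ContDiffOn ℝ (⊤ : ℕ∞) f U) (i : Fin d) : ContDiffOn ℝ (⊤ : ℕ∞) (pd i f) U :=
  (ContinuousLinearMap.apply ℝ F (Pi.single i 1 : Fin d → ℝ)).contDiff.comp_contDiffOn
    (hf.fderiv_of_isOpen hU (by exact_mod_cast le_top))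

theorem pd_add_eqOn {U : Set (Fin d → ℝ)} (hU : IsOpen U) {f g : (Fin d → ℝ) → F}
    (hf : ContDiffOn ℝ (⊤ : ℕ∞) f U) (hg : ContDiffOn ℝ (⊤ : ℕ∞) g U) (i : Fin d) :
    EqOn (pd i (f + g)) (pd i f + pd i g) U := fun x hx => by
  have hfx := (hf.differentiableOn (by simp)).differentiableAt (hU.mem_nhds hx)
  have hgx := (hg.differentiableOn (by simp)).differentiableAt (hU.mem_nhds hx)
  simp [pd, fderiv_add hfx hgx]

theorem pdm_induction
    {P : (((Fin d → ℝ) → F) → ((Fin d → ℝ) → F)) → Prop} (id_mem : P id)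
    (comp_mem : ∀ T S, P T → P S → P (T ∘ S)) (pd_mem : ∀ i, P (pd i)) (α : Fin d → ℕ) :
    P (pdm α) := by
  have pdPow_mem (i : Fin d) (n : ℕ) : P (pdPow i n) := by
    induction n with
    | zero => exact id_mem
    | succ n ih => exact comp_mem _ _ (pd_mem i) ih
  suffices ∀ l : List (Fin d), P (fun f => l.foldr (fun i g => pdPow i (α i) g) f) from this _
  intro l
  induction l with
  | nil => exact id_mem
  | cons i l ih => exact comp_mem _ _ (pdPow_mem i (α i)) ih

theorem pdm_zero (α : Fin d → ℕ) : pdm α (0 : (Fin d → ℝ) → F) = 0 :=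
  pdm_induction (P := fun T => T 0 = 0) rfl
    (fun T S hT hS => by simp only [Function.comp_apply, hS, hT]) pd_zero α

theorem eqOn_pdm_of_eqOn {V : Set (Fin d → ℝ)} (hV : IsOpen V) {f g : (Fin d → ℝ) → F}
    (hfg : EqOn f g V) (α : Fin d → ℕ) : EqOn (pdm α f) (pdm α g) V :=
  pdm_induction (P := fun T => ∀ f g, EqOn f g V → EqOn (T f) (T g) V) (fun _ _ h => h)
    (fun _ _ hT hS f g h => hT _ _ (hS f g h)) (fun i _ _ h => eqOn_pd_of_eqOn hV h i) α f g hfg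

theorem ContDiffOn.pdm {U : Set (Fin d → ℝ)} (hU : IsOpen U) {f : (Fin d → ℝ) → F}
    (hf : ContDiffOn ℝ (⊤ : ℕ∞) f U) (α : Fin d → ℕ) : ContDiffOn ℝ (⊤ : ℕ∞) (pdm α f) U :=
  pdm_induction (P := fun T => ∀ f, ContDiffOn ℝ (⊤ : ℕ∞) f U → ContDiffOn ℝ (⊤ : ℕ∞) (T f) U)
    (fun _ h => h) (fun _ _ hT hS f h => hT _ (hS f h)) (fun i _ h => h.pd hU i) α f hf

theorem pdm_add_eqOn {U : Set (Fin d → ℝ)} (hU : IsOpen U) {f g : (Fin d → ℝ) → F}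
    (hf : ContDiffOn ℝ (⊤ : ℕ∞) f U) (hg : ContDiffOn ℝ (⊤ : ℕ∞) g U) (α : Fin d → ℕ) :
    EqOn (pdm α (f + g)) (pdm α f + pdm α g) U := by
  -- additivity alone does not compose: the outer operator must also respect equality on `U`
  let P := fun T : ((Fin d → ℝ) → F) → ((Fin d → ℝ) → F) =>
    (∀ f, ContDiffOn ℝ (⊤ : ℕ∞) f U → ContDiffOn ℝ (⊤ : ℕ∞) (T f) U) ∧
    (∀ f g, EqOn f g U → EqOn (T f) (T g) U) ∧
    ∀ f g, ContDiffOn ℝ (⊤ : ℕ∞) f U → ContDiffOn ℝ (⊤ : ℕ∞) g U →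
      EqOn (T (f + g)) (T f + T g) U
  refine (pdm_induction (P := P) ?_ ?_ ?_ α).2.2 f g hf hg
  · exact ⟨fun _ h => h, fun _ _ h => h, fun _ _ _ _ _ _ => rfl⟩
  · rintro T S ⟨hT_smooth, hT_congr, hT_add⟩ ⟨hS_smooth, hS_congr, hS_add⟩
    exact ⟨fun f h => hT_smooth _ (hS_smooth f h), fun f g h => hT_congr _ _ (hS_congr f g h),
      fun f g hf hg => (hT_congr _ _ (hS_add f g hf hg)).trans
        (hT_add _ _ (hS_smooth f hf) (hS_smooth g hg))⟩
  · exact fun i => ⟨fun _ h => h.pd hU i, fun _ _ h => eqOn_pd_of_eqOn hU h i,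
      fun _ _ hf hg => pd_add_eqOn hU hf hg i⟩

theorem pdm_eq_zero_of_notMem_tsupport {ψ : (Fin d → ℝ) → F} {x : Fin d → ℝ}
    (hx : x ∉ tsupport ψ) (α : Fin d → ℕ) : pdm α ψ x = 0 := by
  have hψ : EqOn ψ 0 (tsupport ψ)ᶜ := fun _ hy => image_eq_zero_of_notMem_tsupport hy
  simpa [pdm_zero] using eqOn_pdm_of_eqOn (isClosed_tsupport ψ).isOpen_compl hψ α hx

end PartialDerivatives

theorem norm_Dm {d : ℕ} (α : Fin d → ℕ) (f : (Fin d → ℝ) → ℂ) (x : Fin d → ℝ) :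
    ‖Dm α f x‖ = ‖pdm α f x‖ := by
  simp [Dm]

theorem ContinuousOn.enorm_le_eLpNorm_top {X E : Type*} [TopologicalSpace X] [MeasurableSpace X]
    [NormedAddCommGroup E] {μ : Measure X} [μ.IsOpenPosMeasure] {U : Set X} (hU : IsOpen U)
    {g : X → E} (hg : ContinuousOn g U) {x : X} (hx : x ∈ U) :
    ‖g x‖ₑ ≤ eLpNorm g ∞ (μ.restrict U) := by
  have hae : (fun y => min ‖g y‖ₑ (eLpNorm g ∞ (μ.restrict U))) =ᵐ[μ.restrict U]
      fun y => ‖g y‖ₑ := by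
    filter_upwards [enorm_ae_le_eLpNormEssSup g (μ.restrict U)] with y hy
    exact min_eq_left (hy.trans_eq eLpNorm_exponent_top.symm)
  have hmin := Measure.eqOn_open_of_ae_eq hae hU
    ((continuous_id.min continuous_const).comp_continuousOn (ContinuousOn.enorm hg)) (ContinuousOn.enorm hg) hx
  exact hmin.symm.trans_le (min_le_right _ _)

section GevreyNorm

variable {d : ℕ} {F : Type*} [NormedAddCommGroup F] [NormedSpace ℝ F]

theorem mFact_pos (α : Fin d → ℕ) : 0 < mFact α :=
  Finset.prod_pos fun _ _ => Nat.factorial_pos _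

theorem ofReal_mul_enorm_pdm_le_gNorm {s h : ℝ} {U : Set (Fin d → ℝ)} (hU : IsOpen U)
    {f : (Fin d → ℝ) → F} {α : Fin d → ℕ} (hf : ContinuousOn (pdm α f) U)
    {x : Fin d → ℝ} (hx : x ∈ U) :
    ENNReal.ofReal (h ^ mOrder α / (mFact α : ℝ) ^ s) * ‖pdm α f x‖ₑ ≤ gNorm s h ∞ U f := by
  rw [gNorm, seqLpNorm, if_pos rfl]
  refine le_trans ?_ (le_iSup _ α)
  gcongr
  exact hf.enorm_le_eLpNorm_top hU hx

theorem weighted_norm_pdm_le_of_gNorm_le {s h c : ℝ} (hh : 0 ≤ h) (hc : 0 ≤ c)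
    {U : Set (Fin d → ℝ)} (hU : IsOpen U) {f : (Fin d → ℝ) → F} {α : Fin d → ℕ}
    (hf : ContinuousOn (pdm α f) U) (hle : gNorm s h ∞ U f ≤ ENNReal.ofReal c)
    {x : Fin d → ℝ} (hx : x ∈ U) :
    h ^ mOrder α * ‖pdm α f x‖ / (mFact α : ℝ) ^ s ≤ c := by
  have hweight : 0 ≤ h ^ mOrder α / (mFact α : ℝ) ^ s := by positivity
  have hbound := (ofReal_mul_enorm_pdm_le_gNorm hU hf hx).trans hle
  rw [← ofReal_norm, ← ENNReal.ofReal_mul hweight, ENNReal.ofReal_le_ofReal_iff hc] at hbound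
  calc h ^ mOrder α * ‖pdm α f x‖ / (mFact α : ℝ) ^ s
      = h ^ mOrder α / (mFact α : ℝ) ^ s * ‖pdm α f x‖ := by ring
    _ ≤ c := hbound

theorem IsGevreyTest.weighted_norm_pdm_le {s h : ℝ} (hh : 0 < h) {U : Set (Fin d → ℝ)}
    {ψ : (Fin d → ℝ) → F} (hψ : IsGevreyTest s U ψ) :
    ∃ C : ℝ, ∀ (α : Fin d → ℕ) (x : Fin d → ℝ),
      h ^ mOrder α * ‖pdm α ψ x‖ / (mFact α : ℝ) ^ s ≤ C * (1 / 2) ^ mOrder α := by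
  obtain ⟨C, hC⟩ := hψ.2.2.2 (1 / (2 * h)) (by positivity)
  refine ⟨C, fun α x => ?_⟩
  have hfact : 0 < (mFact α : ℝ) ^ s := by have := mFact_pos α; positivity
  rw [div_le_iff₀ hfact]
  calc h ^ mOrder α * ‖pdm α ψ x‖
      ≤ h ^ mOrder α * (C * (1 / (2 * h)) ^ mOrder α * (mFact α : ℝ) ^ s) := by
        gcongr
        exact hC α x
    _ = C * (h * (1 / (2 * h))) ^ mOrder α * (mFact α : ℝ) ^ s := by ring
    _ = C * (1 / 2) ^ mOrder α * (mFact α : ℝ) ^ s := by field_simp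

theorem IsGevreyTest.exists_weighted_norm_pdm_le {s h ε : ℝ} (hh : 0 < h) (hε : 0 < ε)
    {U : Set (Fin d → ℝ)} {ψ : (Fin d → ℝ) → F} (hψ : IsGevreyTest s U ψ) :
    ∃ k : ℕ, ∀ (α : Fin d → ℕ), k ≤ mOrder α → ∀ x : Fin d → ℝ,
      h ^ mOrder α * ‖pdm α ψ x‖ / (mFact α : ℝ) ^ s ≤ ε := by
  obtain ⟨C, hC⟩ := hψ.weighted_norm_pdm_le hh
  have hdecay : Tendsto (fun m : ℕ => C * (1 / 2 : ℝ) ^ m) atTop (𝓝 0) := by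
    simpa using (tendsto_pow_atTop_nhds_zero_of_lt_one (r := (1 / 2 : ℝ)) (by norm_num) (by norm_num)).const_mul C
  obtain ⟨k, hk⟩ := eventually_atTop.mp (hdecay.eventually (ge_mem_nhds hε))
  exact ⟨k, fun α hα x => (hC α x).trans (hk _ hα)⟩

end GevreyNorm

theorem statement_8_general {d : ℕ} (s h : ℝ) (hh : 0 < h)
    (U : Set (Fin d → ℝ)) (hU : IsOpen U)
    (φ : (Fin d → ℝ) → ℂ) (hφ : MemD s h ∞ U φ) :
    ∀ ε : ℝ, 0 < ε → ∃ K : Set (Fin d → ℝ), IsCompact K ∧ K ⊆ U ∧ ∃ k : ℕ, 0 < k ∧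
      (∀ (α : Fin d → ℕ), ∀ x ∈ U \ K,
        h ^ mOrder α * ‖Dm α φ x‖ / (mFact α : ℝ) ^ s ≤ ε) ∧
      (∀ (α : Fin d → ℕ), k ≤ mOrder α → ∀ x ∈ U,
        h ^ mOrder α * ‖Dm α φ x‖ / (mFact α : ℝ) ^ s ≤ ε) := by
  intro ε hε
  obtain ⟨hφ_smooth, -, happrox⟩ := hφ
  obtain ⟨ψ, hψ, hψ_close⟩ := happrox (ε / 2) (half_pos hε)
  have hψ_smooth : ContDiffOn ℝ (⊤ : ℕ∞) ψ U := hψ.1.contDiffOn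
  have hrem (α : Fin d → ℕ) (x) (hx : x ∈ U) :
      h ^ mOrder α * ‖pdm α (φ - ψ) x‖ / (mFact α : ℝ) ^ s ≤ ε / 2 :=
    weighted_norm_pdm_le_of_gNorm_le hh.le (half_pos hε).le hU
      ((hφ_smooth.sub hψ_smooth).pdm hU α).continuousOn hψ_close.le hx
  have hsplit (α : Fin d → ℕ) (x) (hx : x ∈ U) : pdm α φ x = pdm α (φ - ψ) x + pdm α ψ x := by
    have hadd := pdm_add_eqOn (f := φ - ψ) hU (hφ_smooth.sub hψ_smooth) hψ_smooth α hx
    rwa [sub_add_cancel] at hadd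
  obtain ⟨k, hk⟩ := hψ.exists_weighted_norm_pdm_le hh (half_pos hε)
  refine ⟨tsupport ψ, hψ.2.1, hψ.2.2.1, k + 1, k.succ_pos, fun α x hx => ?_,
    fun α hα x hx => ?_⟩
  · rw [norm_Dm, hsplit α x hx.1, pdm_eq_zero_of_notMem_tsupport hx.2, add_zero]
    linarith [hrem α x hx.1]
  · rw [norm_Dm, hsplit α x hx]
    calc h ^ mOrder α * ‖pdm α (φ - ψ) x + pdm α ψ x‖ / (mFact α : ℝ) ^ s
        ≤ h ^ mOrder α * ‖pdm α (φ - ψ) x‖ / (mFact α : ℝ) ^ s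
          + h ^ mOrder α * ‖pdm α ψ x‖ / (mFact α : ℝ) ^ s := by
          rw [← add_div, ← mul_add]
          gcongr
          exact norm_add_le _ _
      _ ≤ ε / 2 + ε / 2 := add_le_add (hrem α x hx) (hk α (by omega) x)
      _ = ε := add_halves ε

/-- Fix `s > 1`, `h > 0` and an open set `U ⊆ ℝ^d`, and let
`φ ∈ D^{(s)}_{L^∞,h}(U)`. Then for every `ε > 0` there exist a compact `K ⊆ U` and
`k ∈ ℤ₊` such that `sup_α sup_{x ∈ U∖K} h^{|α|}|D^αφ(x)|/α!^s ≤ ε` and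
`sup_{|α| ≥ k} h^{|α|} ‖D^αφ‖_{L^∞(U)}/α!^s ≤ ε`. -/
theorem statement_8 {d : ℕ} (s h : ℝ) (hs : 1 < s) (hh : 0 < h)
    (U : Set (Fin d → ℝ)) (hU : IsOpen U)
    (φ : (Fin d → ℝ) → ℂ) (hφ : MemD s h ∞ U φ) :
    ∀ ε : ℝ, 0 < ε → ∃ K : Set (Fin d → ℝ), IsCompact K ∧ K ⊆ U ∧ ∃ k : ℕ, 0 < k ∧
      (∀ (α : Fin d → ℕ), ∀ x ∈ U \ K,
        h ^ mOrder α * ‖Dm α φ x‖ / (mFact α : ℝ) ^ s ≤ ε) ∧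
      (∀ (α : Fin d → ℕ), k ≤ mOrder α → ∀ x ∈ U,
        h ^ mOrder α * ‖Dm α φ x‖ / (mFact α : ℝ) ^ s ≤ ε) :=
  statement_8_general s h hh U hU φ hφ
end
end

section
/- Fix s>1, an open set U ⊆ ℝ^d and 1≤p≤∞. A smooth function φ on U satisfying ‖φ‖_{D^s_{L^p,h}(U)} < ∞ for every h>0 lies in the closure of D^{(s)}(U) with respect to the family of norms {‖·‖_{D^s_{L^p,h}(U)} : h>0} (the topology of B^{(s)}_{L^p}(U)) if and only if for every h>0, φ lies in the closure of D^{(s)}(U) in the single Banach space D^s_{L^p,h}(U). In particular, D^{(s)}_{L^p}(U) coincides, as a topological vector space, with the reduced projective limit of the spaces D^{(s)}_{L^p,h}(U) as h→∞. -/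
open MeasureTheory Filter Set
open scoped BigOperators ENNReal NNReal Topology

noncomputable section

variable {d : ℕ} {F : Type*} [NormedAddCommGroup F] [NormedSpace ℝ F]

lemma seqLpNorm_mono {ι : Type*} (p : ℝ≥0∞) {w v : ι → ℝ≥0∞} (hwv : ∀ i, w i ≤ v i) :
    seqLpNorm p w ≤ seqLpNorm p v := by
  unfold seqLpNorm
  split
  · exact iSup_mono hwv
  · gcongr with i
    exact hwv i

lemma gNorm_mono (s : ℝ) {h h' : ℝ} (hh : 0 ≤ h) (hle : h ≤ h') (p : ℝ≥0∞)
    (U : Set (Fin d → ℝ)) (f : (Fin d → ℝ) → F) :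
    gNorm s h p U f ≤ gNorm s h' p U f :=
  seqLpNorm_mono p fun _ => by gcongr

lemma exists_isGevreyTest_forall_gNorm_sub_lt {s : ℝ} {p : ℝ≥0∞} {U : Set (Fin d → ℝ)}
    {φ : (Fin d → ℝ) → F} (hφ : ∀ h : ℝ, 0 < h → MemD s h p U φ) {ε : ℝ} (hε : 0 < ε)
    (H : Finset ℝ) (hH : ∀ h ∈ H, 0 < h) :
    ∃ ψ : (Fin d → ℝ) → F, IsGevreyTest s U ψ ∧
      ∀ h ∈ H, gNorm s h p U (φ - ψ) < ENNReal.ofReal ε := by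
  -- the norms increase with `h`, so one approximation in a norm dominating all of `H` suffices
  obtain ⟨M, hM⟩ := H.exists_le
  obtain ⟨ψ, hψ, happrox⟩ := (hφ (max M 1) (by positivity)).2.2 ε hε
  exact ⟨ψ, hψ, fun h hmem =>
    (gNorm_mono s (hH h hmem).le ((hM h hmem).trans (le_max_left M 1)) p U _).trans_lt happrox⟩

theorem statement_9_general {d : ℕ} (s : ℝ)
    (U : Set (Fin d → ℝ))
    (p : ℝ≥0∞)
    (φ : (Fin d → ℝ) → ℂ) (hsmooth : ContDiffOn ℝ (⊤ : ℕ∞) φ U)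
    (hfin : ∀ h : ℝ, 0 < h → gNorm s h p U φ < ⊤) :
    (∀ ε : ℝ, 0 < ε → ∀ H : Finset ℝ, (∀ h ∈ H, (0 : ℝ) < h) →
        ∃ ψ : (Fin d → ℝ) → ℂ, IsGevreyTest s U ψ ∧
          ∀ h ∈ H, gNorm s h p U (φ - ψ) < ENNReal.ofReal ε) ↔
    (∀ h : ℝ, 0 < h → MemD s h p U φ) := by
  refine ⟨fun happrox h hh => ⟨hsmooth, hfin h hh, fun ε hε => ?_⟩,
    fun hmem ε hε H hH => exists_isGevreyTest_forall_gNorm_sub_lt hmem hε H hH⟩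
  obtain ⟨ψ, hψ, hlt⟩ := happrox ε hε {h} (by simpa using hh)
  exact ⟨ψ, hψ, hlt h (Finset.mem_singleton_self h)⟩

/-- Fix `s > 1`, an open set `U ⊆ ℝ^d` and `1 ≤ p ≤ ∞`. A smooth function
`φ` on `U` with `‖φ‖_{D^s_{L^p,h}(U)} < ∞` for every `h > 0` lies in the closure of
`D^{(s)}(U)` with respect to the whole family of norms (the topology of `B^{(s)}_{L^p}(U)`,
whose basic neighbourhoods are finite intersections of norm-balls) if and only if for every
`h > 0` it lies in the closure of `D^{(s)}(U)` in the single Banach space `D^s_{L^p,h}(U)`.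
In particular `D^{(s)}_{L^p}(U)` coincides with the reduced projective limit of the spaces
`D^{(s)}_{L^p,h}(U)` as `h → ∞`. -/
theorem statement_9 {d : ℕ} (s : ℝ) (hs : 1 < s)
    (U : Set (Fin d → ℝ)) (hU : IsOpen U)
    (p : ℝ≥0∞) (hp : 1 ≤ p)
    (φ : (Fin d → ℝ) → ℂ) (hsmooth : ContDiffOn ℝ (⊤ : ℕ∞) φ U)
    (hfin : ∀ h : ℝ, 0 < h → gNorm s h p U φ < ⊤) :
    (∀ ε : ℝ, 0 < ε → ∀ H : Finset ℝ, (∀ h ∈ H, (0 : ℝ) < h) →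
        ∃ ψ : (Fin d → ℝ) → ℂ, IsGevreyTest s U ψ ∧
          ∀ h ∈ H, gNorm s h p U (φ - ψ) < ENNReal.ofReal ε) ↔
    (∀ h : ℝ, 0 < h → MemD s h p U φ) :=
  statement_9_general s U p φ hsmooth hfin
end
end

section
/- Fix s>1, a bounded open set U ⊆ ℝ^d, h>0, α∈ℕ^d and 1≤p≤∞, with q the conjugate exponent. The set G_α = {D^αδ_x : x∈U} of continuous linear functionals φ ↦ (−1)^{|α|}D^αφ(x) on D^{(s)}_{L^q,h}(U) is precompact (totally bounded) in the dual Banach space D'^{(s)}_{L^p,h}(U) with its operator norm. -/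
open MeasureTheory Filter Set
open scoped BigOperators ENNReal NNReal Topology

noncomputable section

variable {d : ℕ} {F : Type*} [NormedAddCommGroup F] [NormedSpace ℝ F]

/-! For a test function `θ` supported in `U`, the fundamental theorem of calculus in each variable
bounds `sup |∂^β θ|` by `‖∂^{β+(1,…,1)} θ‖_{L¹(U)}`, hence, by Hölder on the bounded set `U`, by a
constant times `‖∂^{β+(1,…,1)} θ‖_{L^q(U)} ≤ (β+(1,…,1))!^s h^{-|β|-d} ‖θ‖`. Applied to the first
derivatives of `∂^α θ`, this makes `∂^α θ` Lipschitz with a constant that is uniform on the unit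
ball. The bound passes to every `φ` of the closure `D^{(s)}_{L^q,h}(U)`: the derivatives `∂^α ψ_n`
of approximating test functions converge pointwise, and in `L^q(U)` to the continuous `∂^α φ`.
A uniformly Lipschitz family is equicontinuous, so a finite `ε/K`-net of the totally bounded `U` is
an `ε`-net of `G_α` in the dual norm. -/

def pdl (δ : Fin d → ℕ) (l : List (Fin d)) (f : (Fin d → ℝ) → F) : (Fin d → ℝ) → F :=
  l.foldr (fun i g => pdPow i (δ i) g) f

section PartialDerivatives

variable {f g : (Fin d → ℝ) → F} {U : Set (Fin d → ℝ)}

theorem pdm_eq_pdl (δ : Fin d → ℕ) (f : (Fin d → ℝ) → F) :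
    pdm δ f = pdl δ (List.finRange d) f := rfl

theorem pdPow_mem {S : Set ((Fin d → ℝ) → F)} (hS : ∀ i, ∀ g ∈ S, pd i g ∈ S) (i : Fin d)
    (n : ℕ) (hf : f ∈ S) : pdPow i n f ∈ S := by
  induction n with
  | zero => exact hf
  | succ n ih => exact hS i _ ih

theorem pdl_mem {S : Set ((Fin d → ℝ) → F)} (hS : ∀ i, ∀ g ∈ S, pd i g ∈ S) (δ : Fin d → ℕ)
    (l : List (Fin d)) (hf : f ∈ S) : pdl δ l f ∈ S := by
  induction l with
  | nil => exact hf
  | cons j t ih => exact pdPow_mem hS j (δ j) ih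

theorem contDiff_pd (hf : ContDiff ℝ (⊤ : ℕ∞) f) (i : Fin d) : ContDiff ℝ (⊤ : ℕ∞) (pd i f) :=
  (hf.fderiv_right (by simp)).clm_apply contDiff_const

theorem contDiffOn_pd (hU : IsOpen U) (hf : ContDiffOn ℝ (⊤ : ℕ∞) f U) (i : Fin d) :
    ContDiffOn ℝ (⊤ : ℕ∞) (pd i f) U :=
  (hf.fderiv_of_isOpen hU (by simp)).clm_apply contDiffOn_const

theorem contDiff_pdPow (hf : ContDiff ℝ (⊤ : ℕ∞) f) (i : Fin d) (n : ℕ) :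
    ContDiff ℝ (⊤ : ℕ∞) (pdPow i n f) :=
  pdPow_mem (S := {g | ContDiff ℝ (⊤ : ℕ∞) g}) (fun i _ hg => contDiff_pd hg i) i n hf

theorem contDiffOn_pdPow (hU : IsOpen U) (hf : ContDiffOn ℝ (⊤ : ℕ∞) f U) (i : Fin d) (n : ℕ) :
    ContDiffOn ℝ (⊤ : ℕ∞) (pdPow i n f) U :=
  pdPow_mem (S := {g | ContDiffOn ℝ (⊤ : ℕ∞) g U}) (fun i _ hg => contDiffOn_pd hU hg i) i n hf

theorem contDiff_pdl (hf : ContDiff ℝ (⊤ : ℕ∞) f) (δ : Fin d → ℕ) (l : List (Fin d)) :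
    ContDiff ℝ (⊤ : ℕ∞) (pdl δ l f) :=
  pdl_mem (S := {g | ContDiff ℝ (⊤ : ℕ∞) g}) (fun i _ hg => contDiff_pd hg i) δ l hf

theorem contDiffOn_pdl (hU : IsOpen U) (hf : ContDiffOn ℝ (⊤ : ℕ∞) f U) (δ : Fin d → ℕ)
    (l : List (Fin d)) : ContDiffOn ℝ (⊤ : ℕ∞) (pdl δ l f) U :=
  pdl_mem (S := {g | ContDiffOn ℝ (⊤ : ℕ∞) g U}) (fun i _ hg => contDiffOn_pd hU hg i) δ l hf

theorem contDiff_pdm (hf : ContDiff ℝ (⊤ : ℕ∞) f) (δ : Fin d → ℕ) :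
    ContDiff ℝ (⊤ : ℕ∞) (pdm δ f) :=
  contDiff_pdl hf δ _

theorem contDiffOn_pdm (hU : IsOpen U) (hf : ContDiffOn ℝ (⊤ : ℕ∞) f U) (δ : Fin d → ℕ) :
    ContDiffOn ℝ (⊤ : ℕ∞) (pdm δ f) U :=
  contDiffOn_pdl hU hf δ _

theorem tsupport_pdl_subset (δ : Fin d → ℕ) (l : List (Fin d)) (f : (Fin d → ℝ) → F) :
    tsupport (pdl δ l f) ⊆ tsupport f :=
  pdl_mem (S := {g | tsupport g ⊆ tsupport f})
    (fun _ _ hg => (tsupport_fderiv_apply_subset ℝ _).trans hg) δ l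
    (show tsupport f ⊆ tsupport f from subset_rfl)

theorem pd_eqOn_sub (hU : IsOpen U) (hf : ContDiffOn ℝ (⊤ : ℕ∞) f U)
    (hg : ContDiffOn ℝ (⊤ : ℕ∞) g U) {u : (Fin d → ℝ) → F} (hu : EqOn u (f - g) U) (i : Fin d) :
    EqOn (pd i u) (pd i f - pd i g) U := by
  intro x hx
  have hfx := (hf.differentiableOn (by simp)).differentiableAt (hU.mem_nhds hx)
  have hgx := (hg.differentiableOn (by simp)).differentiableAt (hU.mem_nhds hx)
  simp [pd, (hu.eventuallyEq_of_mem (hU.mem_nhds hx)).fderiv_eq, fderiv_sub hfx hgx]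

theorem pdPow_eqOn_sub (hU : IsOpen U) (hf : ContDiffOn ℝ (⊤ : ℕ∞) f U)
    (hg : ContDiffOn ℝ (⊤ : ℕ∞) g U) {u : (Fin d → ℝ) → F} (hu : EqOn u (f - g) U) (i : Fin d)
    (n : ℕ) : EqOn (pdPow i n u) (pdPow i n f - pdPow i n g) U := by
  induction n with
  | zero => exact hu
  | succ n ih =>
    exact pd_eqOn_sub hU (contDiffOn_pdPow hU hf i n) (contDiffOn_pdPow hU hg i n) ih i

theorem pdl_eqOn_sub (hU : IsOpen U) (hf : ContDiffOn ℝ (⊤ : ℕ∞) f U)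
    (hg : ContDiffOn ℝ (⊤ : ℕ∞) g U) {u : (Fin d → ℝ) → F} (hu : EqOn u (f - g) U)
    (δ : Fin d → ℕ) (l : List (Fin d)) : EqOn (pdl δ l u) (pdl δ l f - pdl δ l g) U := by
  induction l with
  | nil => exact hu
  | cons j t ih =>
    exact pdPow_eqOn_sub hU (contDiffOn_pdl hU hf δ t) (contDiffOn_pdl hU hg δ t) ih j (δ j)

theorem pdm_eqOn_sub (hU : IsOpen U) (hf : ContDiffOn ℝ (⊤ : ℕ∞) f U)
    (hg : ContDiffOn ℝ (⊤ : ℕ∞) g U) (δ : Fin d → ℕ) :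
    EqOn (pdm δ (f - g)) (pdm δ f - pdm δ g) U :=
  pdl_eqOn_sub hU hf hg (fun _ _ => rfl) δ _

theorem pdm_sub (hf : ContDiff ℝ (⊤ : ℕ∞) f) (hg : ContDiff ℝ (⊤ : ℕ∞) g) (δ : Fin d → ℕ) :
    pdm δ (f - g) = pdm δ f - pdm δ g :=
  funext fun x => pdm_eqOn_sub isOpen_univ hf.contDiffOn hg.contDiffOn δ (mem_univ x)

theorem pd_comm (hf : ContDiff ℝ (⊤ : ℕ∞) f) (i j : Fin d) : pd i (pd j f) = pd j (pd i f) := by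
  funext x
  have hf' : ContDiff ℝ (⊤ : ℕ∞) (fderiv ℝ f) := hf.fderiv_right (by simp)
  have hsecond : ∀ k l : Fin d,
      pd k (pd l f) x = fderiv ℝ (fderiv ℝ f) x (Pi.single k 1) (Pi.single l 1) := by
    intro k l
    have := fderiv_clm_apply (c := fderiv ℝ f) (u := fun _ => (Pi.single l 1 : Fin d → ℝ))
      ((hf'.differentiable (by simp)) x) (differentiableAt_const _)
    change fderiv ℝ (fun y => fderiv ℝ f y (Pi.single l 1)) x (Pi.single k 1) = _
    simp [this]
  rw [hsecond, hsecond]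
  exact second_derivative_symmetric_of_eventually_of_real
    (Eventually.of_forall fun y => ((hf.differentiable (by simp)) y).hasFDerivAt)
    ((hf'.differentiable (by simp)) x).hasFDerivAt _ _

theorem pd_pdPow_comm (hf : ContDiff ℝ (⊤ : ℕ∞) f) (i j : Fin d) (n : ℕ) :
    pd i (pdPow j n f) = pdPow j n (pd i f) := by
  induction n with
  | zero => rfl
  | succ n ih =>
    change pd i (pd j (pdPow j n f)) = pd j (pdPow j n (pd i f))
    rw [pd_comm (contDiff_pdPow hf j n) i j, ih]

theorem pdl_congr {δ δ' : Fin d → ℕ} {l : List (Fin d)} (h : ∀ j ∈ l, δ j = δ' j) :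
    pdl δ l f = pdl δ' l f := by
  induction l with
  | nil => rfl
  | cons j t ih =>
    change pdPow j (δ j) (pdl δ t f) = pdPow j (δ' j) (pdl δ' t f)
    rw [h j List.mem_cons_self, ih fun k hk => h k (List.mem_cons_of_mem j hk)]

theorem pdl_add_single (hf : ContDiff ℝ (⊤ : ℕ∞) f) (δ : Fin d → ℕ) {i : Fin d}
    {l : List (Fin d)} (hl : l.Nodup) (hi : i ∈ l) :
    pdl (δ + Pi.single i 1) l f = pd i (pdl δ l f) := by
  induction l with
  | nil => simp at hi
  | cons j t ih =>
    obtain ⟨hjt, hnd⟩ := List.nodup_cons.1 hl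
    change pdPow j ((δ + Pi.single i 1 : Fin d → ℕ) j) (pdl (δ + Pi.single i 1) t f)
      = pd i (pdPow j (δ j) (pdl δ t f))
    by_cases hji : j = i
    · subst hji
      have hrest : pdl (δ + Pi.single j 1) t f = pdl δ t f :=
        pdl_congr fun k hk => by simp [ne_of_mem_of_not_mem hk hjt]
      rw [hrest, Pi.add_apply, Pi.single_eq_same]
      rfl
    · rw [Pi.add_apply, Pi.single_eq_of_ne hji, add_zero,
        ih hnd ((List.mem_cons.1 hi).resolve_left (Ne.symm hji)),
        pd_pdPow_comm (contDiff_pdl hf δ t)]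

theorem pdm_add_single (hf : ContDiff ℝ (⊤ : ℕ∞) f) (δ : Fin d → ℕ) (i : Fin d) :
    pdm (δ + Pi.single i 1) f = pd i (pdm δ f) :=
  pdl_add_single hf δ (List.nodup_finRange d) (List.mem_finRange i)

theorem pdl_one_pdm (hf : ContDiff ℝ (⊤ : ℕ∞) f) (δ : Fin d → ℕ) (l : List (Fin d)) :
    pdl (fun _ => 1) l (pdm δ f) = pdm (δ + (l.map fun i => Pi.single i 1).sum) f := by
  induction l with
  | nil => rw [List.map_nil, List.sum_nil, add_zero]; rfl
  | cons i t ih =>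
    change pd i (pdl (fun _ => 1) t (pdm δ f)) = _
    rw [ih, ← pdm_add_single hf, List.map_cons, List.sum_cons, add_comm (Pi.single i 1),
      add_assoc]

theorem pdm_one_pdm (hf : ContDiff ℝ (⊤ : ℕ∞) f) (δ : Fin d → ℕ) :
    pdm (fun _ => 1) (pdm δ f) = pdm (δ + 1) f := by
  rw [pdm_eq_pdl, pdl_one_pdm hf, ← Fin.sum_univ_def, Finset.univ_sum_single]
  rfl

theorem lipschitzWith_of_nnnorm_pd_le (hf : Differentiable ℝ f) {M : Fin d → ℝ≥0}
    (hM : ∀ i x, ‖pd i f x‖₊ ≤ M i) : LipschitzWith (∑ i, M i) f := by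
  refine lipschitzWith_of_nnnorm_fderiv_le hf fun x => ?_
  rw [← NNReal.coe_le_coe, coe_nnnorm, NNReal.coe_sum]
  refine ContinuousLinearMap.opNorm_le_bound _ (by positivity) fun v => ?_
  calc ‖fderiv ℝ f x v‖ = ‖∑ i, v i • pd i f x‖ := by
        conv_lhs => rw [← Finset.univ_sum_single v]
        rw [map_sum]
        refine congrArg norm (Finset.sum_congr rfl fun i _ => ?_)
        rw [pd, ← map_smul, ← Pi.single_smul', smul_eq_mul, mul_one]
    _ ≤ ∑ i, ‖v‖ * M i := by
        refine norm_sum_le_of_le _ fun i _ => ?_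
        rw [norm_smul]
        exact mul_le_mul (norm_le_pi_norm v i) (hM i x) (norm_nonneg _) (norm_nonneg _)
    _ = (∑ i, (M i : ℝ)) * ‖v‖ := by rw [← Finset.mul_sum, mul_comm]

end PartialDerivatives

theorem enorm_le_lintegral_pd {G : (Fin d → ℝ) → F} (hG : ContDiff ℝ 1 G)
    (hcs : HasCompactSupport G) (i : Fin d) (y : Fin d → ℝ) :
    ‖G y‖ₑ ≤ ∫⁻ t, ‖pd i G (Function.update y i t)‖ₑ := by
  have hline : ContDiff ℝ 1 (G ∘ Function.update y i) := hG.comp (contDiff_update 1 y i)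
  calc ‖G y‖ₑ = ‖(G ∘ Function.update y i) (y i)‖ₑ := by simp
    _ ≤ ∫⁻ t in Iic (y i), ‖deriv (G ∘ Function.update y i) t‖ₑ :=
      HasCompactSupport.enorm_le_lintegral_Ici_deriv hline
        (hcs.comp_isClosedEmbedding (isClosedEmbedding_update y i)) _
    _ ≤ ∫⁻ t, ‖deriv (G ∘ Function.update y i) t‖ₑ := setLIntegral_le_lintegral _ _
    _ = ∫⁻ t, ‖pd i G (Function.update y i t)‖ₑ := by
      congr 1
      funext t
      rw [fderiv_comp_deriv _ ((hG.differentiable one_ne_zero) _)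
        (hasDerivAt_update y i t).differentiableAt, deriv_update]
      rfl

/-- The fundamental theorem of calculus in the variables of `l`, one after the other. -/
theorem enorm_le_lmarginal_pdl {ρ : (Fin d → ℝ) → F} (hρ : ContDiff ℝ (⊤ : ℕ∞) ρ)
    (hcs : HasCompactSupport ρ) {l : List (Fin d)} (hl : l.Nodup) :
    (fun x => ‖ρ x‖ₑ) ≤
      ∫⋯∫⁻_l.toFinset, (fun y => ‖pdl (fun _ => 1) l ρ y‖ₑ) ∂fun _ => volume := by
  induction l with
  | nil => simp only [List.toFinset_nil, lmarginal_empty]; rfl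
  | cons i t ih =>
    obtain ⟨hit, hnd⟩ := List.nodup_cons.1 hl
    set G := pdl (fun _ => 1) t ρ
    have hG : ContDiff ℝ (⊤ : ℕ∞) G := contDiff_pdl hρ _ t
    have hGcs : HasCompactSupport G :=
      hcs.mono' <| (subset_tsupport _).trans (tsupport_pdl_subset _ t ρ)
    refine (ih hnd).trans ?_
    calc (∫⋯∫⁻_t.toFinset, (fun y => ‖G y‖ₑ) ∂fun _ => volume)
        ≤ ∫⋯∫⁻_t.toFinset, (fun y => ∫⁻ τ, ‖pd i G (Function.update y i τ)‖ₑ)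
            ∂fun _ => volume :=
          lmarginal_mono fun y => enorm_le_lintegral_pd (hG.of_le (by simp)) hGcs i y
      _ = ∫⋯∫⁻_(i :: t).toFinset, (fun y => ‖pd i G y‖ₑ) ∂fun _ => volume := by
          rw [List.toFinset_cons, lmarginal_insert' _ _ (by simpa using hit)]
          exact (contDiff_pd hG i).continuous.enorm.measurable

theorem enorm_le_lintegral_pdm_one {ρ : (Fin d → ℝ) → F} (hρ : ContDiff ℝ (⊤ : ℕ∞) ρ)
    (hcs : HasCompactSupport ρ) (x : Fin d → ℝ) :
    ‖ρ x‖ₑ ≤ ∫⁻ y, ‖pdm (fun _ => 1) ρ y‖ₑ := by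
  have := enorm_le_lmarginal_pdl hρ hcs (List.nodup_finRange d) x
  rwa [List.toFinset_finRange, lmarginal_univ, ← volume_pi] at this

theorem enorm_pdm_le_eLpNorm {θ : (Fin d → ℝ) → F} (hθ : ContDiff ℝ (⊤ : ℕ∞) θ)
    (hcs : HasCompactSupport θ) {U : Set (Fin d → ℝ)} (hsupp : tsupport θ ⊆ U) {q : ℝ≥0∞}
    (hq : 1 ≤ q) (β : Fin d → ℕ) (x : Fin d → ℝ) :
    ‖pdm β θ x‖ₑ ≤
      eLpNorm (pdm (β + 1) θ) q (volume.restrict U) * volume U ^ (1 - 1 / q.toReal) := by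
  have hβ : HasCompactSupport (pdm β θ) :=
    hcs.mono' <| (subset_tsupport _).trans (tsupport_pdl_subset _ _ θ)
  calc ‖pdm β θ x‖ₑ ≤ ∫⁻ y, ‖pdm (β + 1) θ y‖ₑ := by
        simpa only [pdm_one_pdm hθ] using enorm_le_lintegral_pdm_one (contDiff_pdm hθ β) hβ x
    _ = eLpNorm (pdm (β + 1) θ) 1 (volume.restrict U) := by
        rw [eLpNorm_one_eq_lintegral_enorm]
        refine (setLIntegral_eq_of_support_subset fun y hy => ?_).symm
        exact hsupp <| tsupport_pdl_subset _ _ θ <|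
          subset_tsupport (pdm (β + 1) θ) (by simpa using hy)
    _ ≤ _ := by
        simpa using eLpNorm_le_eLpNorm_mul_rpow_measure_univ (μ := volume.restrict U) hq
          (contDiff_pdm hθ (β + 1)).continuous.aestronglyMeasurable

theorem cauchySeq_of_edist_le_add {X : Type*} [PseudoEMetricSpace X] {u : ℕ → X}
    {b : ℕ → ℝ≥0∞} (hu : ∀ n m, edist (u n) (u m) ≤ b n + b m)
    (hb : Tendsto b atTop (𝓝 0)) : CauchySeq u := by
  refine EMetric.cauchySeq_iff.2 fun ε hε => ?_
  obtain ⟨N, hN⟩ := eventually_atTop.1 (hb.eventually (gt_mem_nhds (ENNReal.half_pos hε.ne')))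
  exact ⟨N, fun m hm n hn => (hu m n).trans_lt
    ((ENNReal.add_lt_add (hN m hm) (hN n hn)).trans_eq (ENNReal.add_halves ε))⟩

/-- The pointwise limit of the `u n` is `K`-Lipschitz, and it agrees with `f` on `U` because it is
also the `L^p(U)`-limit. -/
theorem LipschitzOnWith.of_tendsto_eLpNorm {X E : Type*} [PseudoMetricSpace X]
    [SecondCountableTopology X] [MeasurableSpace X] [OpensMeasurableSpace X]
    [NormedAddCommGroup E] [CompleteSpace E] {μ : Measure X} [μ.IsOpenPosMeasure] {U : Set X}
    (hU : IsOpen U) {p : ℝ≥0∞} (hp : p ≠ 0) {K : ℝ≥0} {u : ℕ → X → E} {f : X → E}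
    (hu : ∀ n, Continuous (u n)) (huK : ∀ᶠ n in atTop, LipschitzWith K (u n))
    (hcauchy : ∀ x, CauchySeq fun n => u n x)
    (hlim : Tendsto (fun n => eLpNorm (f - u n) p (μ.restrict U)) atTop (𝓝 0))
    (hf : ContinuousOn f U) : LipschitzOnWith K f U := by
  choose g hg using fun x => cauchySeq_tendsto_of_complete (hcauchy x)
  have hgK : LipschitzWith K g :=
    (isClosed_setOfPred_lipschitzWith K).mem_of_tendsto (tendsto_pi_nhds.2 hg) huK
  have hnorm : eLpNorm (f - g) p (μ.restrict U) = 0 := by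
    refine le_antisymm ?_ zero_le
    calc eLpNorm (f - g) p (μ.restrict U)
        ≤ liminf (fun n => eLpNorm (f - u n) p (μ.restrict U)) atTop :=
          Lp.eLpNorm_lim_le_liminf_eLpNorm
            (fun n => (hf.sub (hu n).continuousOn).aestronglyMeasurable hU.measurableSet) _
            (Eventually.of_forall fun x => tendsto_const_nhds.sub (hg x))
      _ = 0 := hlim.liminf_eq
  have hae : f =ᵐ[μ.restrict U] g := by
    filter_upwards [(eLpNorm_eq_zero_iff ((hf.sub hgK.continuous.continuousOn).aestronglyMeasurable
      hU.measurableSet) hp).1 hnorm] with x hx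
    exact sub_eq_zero.1 hx
  have hfg : EqOn f g U := Measure.eqOn_open_of_ae_eq hae hU hf hgK.continuous.continuousOn
  intro x hx y hy
  rw [hfg hx, hfg hy]
  exact hgK x y

theorem TotallyBounded.exists_finite_forall_dist_le {X E ι : Type*} [PseudoMetricSpace X]
    [PseudoMetricSpace E] {U : Set X} (hU : TotallyBounded U) {K : ℝ≥0} {f : ι → X → E}
    (hf : ∀ i, LipschitzOnWith K (f i) U) {ε : ℝ} (hε : 0 < ε) :
    ∃ Y : Set X, Y.Finite ∧ Y ⊆ U ∧ ∀ x ∈ U, ∃ y ∈ Y, ∀ i, dist (f i x) (f i y) ≤ ε := by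
  obtain ⟨Y, hYU, hYfin, hcover⟩ :=
    Metric.finite_approx_of_totallyBounded hU (ε / (K + 1)) (by positivity)
  refine ⟨Y, hYfin, hYU, fun x hx => ?_⟩
  obtain ⟨y, hy, hxy⟩ := mem_iUnion₂.1 (hcover hx)
  refine ⟨y, hy, fun i => ?_⟩
  calc dist (f i x) (f i y) ≤ K * dist x y := (hf i).dist_le_mul x hx y (hYU hy)
    _ ≤ (K + 1) * (ε / (K + 1)) := by gcongr; exacts [by linarith, (Metric.mem_ball.1 hxy).le]
    _ = ε := by field_simp

theorem le_seqLpNorm {ι : Type*} {q : ℝ≥0∞} (hq : q ≠ 0) (w : ι → ℝ≥0∞) (i : ι) :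
    w i ≤ seqLpNorm q w := by
  unfold seqLpNorm
  split_ifs with hq'
  · exact le_iSup w i
  · have hr : 0 < q.toReal := ENNReal.toReal_pos hq hq'
    calc w i = (w i ^ q.toReal) ^ (1 / q.toReal) := by
          rw [← ENNReal.rpow_mul, mul_one_div_cancel hr.ne', ENNReal.rpow_one]
      _ ≤ (∑' j, w j ^ q.toReal) ^ (1 / q.toReal) := by gcongr; exact ENNReal.le_tsum i

/-- The weight of `‖∂^γ φ‖_{L^q(U)}` in `gNorm s h q U φ`. -/
def gWeight (s h : ℝ) (γ : Fin d → ℕ) : ℝ≥0∞ :=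
  ENNReal.ofReal (h ^ mOrder γ / (mFact γ : ℝ) ^ s)

theorem gWeight_pos (s : ℝ) {h : ℝ} (hh : 0 < h) (γ : Fin d → ℕ) : 0 < gWeight s h γ := by
  have hfact : (0 : ℝ) < mFact γ := by
    exact_mod_cast Finset.prod_pos fun i _ => Nat.factorial_pos (γ i)
  exact ENNReal.ofReal_pos.2 (div_pos (pow_pos hh _) (Real.rpow_pos_of_pos hfact s))

section Gevrey

variable {s h : ℝ} {q : ℝ≥0∞} {U : Set (Fin d → ℝ)}

theorem eLpNorm_pdm_le_gNorm (hh : 0 < h) (hq : q ≠ 0) (γ : Fin d → ℕ) (f : (Fin d → ℝ) → F) :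
    eLpNorm (pdm γ f) q (volume.restrict U) ≤ (gWeight s h γ)⁻¹ * gNorm s h q U f :=
  (ENNReal.mul_le_iff_le_inv (gWeight_pos s hh γ).ne' ENNReal.ofReal_ne_top).1
    (le_seqLpNorm hq (fun γ => gWeight s h γ * eLpNorm (pdm γ f) q (volume.restrict U)) γ)

theorem eLpNorm_pdm_sub_le_gNorm (hh : 0 < h) (hq : q ≠ 0) (hU : IsOpen U)
    {f g : (Fin d → ℝ) → F} (hf : ContDiffOn ℝ (⊤ : ℕ∞) f U) (hg : ContDiffOn ℝ (⊤ : ℕ∞) g U)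
    (γ : Fin d → ℕ) :
    eLpNorm (pdm γ f - pdm γ g) q (volume.restrict U) ≤
      (gWeight s h γ)⁻¹ * gNorm s h q U (f - g) := by
  rw [← eLpNorm_congr_ae ((ae_restrict_iff' hU.measurableSet).2
    (Eventually.of_forall (pdm_eqOn_sub hU hf hg γ)))]
  exact eLpNorm_pdm_le_gNorm hh hq γ _

theorem eLpNorm_pdm_le_gNorm_add (hh : 0 < h) (hq : 1 ≤ q) (hU : IsOpen U)
    {f g : (Fin d → ℝ) → F} (hf : ContDiffOn ℝ (⊤ : ℕ∞) f U) (hg : ContDiffOn ℝ (⊤ : ℕ∞) g U)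
    (γ : Fin d → ℕ) :
    eLpNorm (pdm γ g) q (volume.restrict U) ≤
      (gWeight s h γ)⁻¹ * (gNorm s h q U f + gNorm s h q U (f - g)) := by
  have hq0 : q ≠ 0 := (zero_lt_one.trans_le hq).ne'
  calc eLpNorm (pdm γ g) q (volume.restrict U)
      = eLpNorm (pdm γ f - (pdm γ f - pdm γ g)) q (volume.restrict U) := by rw [sub_sub_cancel]
    _ ≤ eLpNorm (pdm γ f) q (volume.restrict U) +
          eLpNorm (pdm γ f - pdm γ g) q (volume.restrict U) :=
        eLpNorm_sub_le ((contDiffOn_pdm hU hf γ).continuousOn.aestronglyMeasurable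
          hU.measurableSet) ((contDiffOn_pdm hU hf γ).sub (contDiffOn_pdm hU hg γ)
            |>.continuousOn.aestronglyMeasurable hU.measurableSet) hq
    _ ≤ _ := by
        rw [mul_add]
        exact add_le_add (eLpNorm_pdm_le_gNorm hh hq0 γ f)
          (eLpNorm_pdm_sub_le_gNorm hh hq0 hU hf hg γ)

theorem MemD.exists_tendsto_gNorm_sub {φ : (Fin d → ℝ) → F} (hφ : MemD s h q U φ) :
    ∃ ψ : ℕ → (Fin d → ℝ) → F, (∀ n, IsGevreyTest s U (ψ n)) ∧
      Tendsto (fun n => gNorm s h q U (φ - ψ n)) atTop (𝓝 0) := by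
  choose ψ hψ hψφ using fun n : ℕ => hφ.2.2 (1 / (n + 1)) (by positivity)
  refine ⟨ψ, hψ, tendsto_of_tendsto_of_tendsto_of_le_of_le tendsto_const_nhds ?_
    (fun _ => zero_le) fun n => (hψφ n).le⟩
  simpa using ENNReal.tendsto_ofReal (tendsto_one_div_add_atTop_nhds_zero_nat (𝕜 := ℝ))

theorem lipschitzWith_pdm_of_eLpNorm_le {θ : (Fin d → ℝ) → F} (hθ : ContDiff ℝ (⊤ : ℕ∞) θ)
    (hcs : HasCompactSupport θ) (hsupp : tsupport θ ⊆ U) (hq : 1 ≤ q) (α : Fin d → ℕ)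
    {M : Fin d → ℝ≥0} (hM : ∀ i, eLpNorm (pdm (α + Pi.single i 1 + 1) θ) q (volume.restrict U) *
      volume U ^ (1 - 1 / q.toReal) ≤ M i) :
    LipschitzWith (∑ i, M i) (pdm α θ) := by
  refine lipschitzWith_of_nnnorm_pd_le ((contDiff_pdm hθ α).differentiable (by simp))
    fun i x => ?_
  rw [← pdm_add_single hθ, ← ENNReal.coe_le_coe]
  exact (enorm_pdm_le_eLpNorm hθ hcs hsupp hq _ x).trans (hM i)

theorem edist_pdm_le_gNorm_add (hh : 0 < h) (hq : 1 ≤ q) (hU : IsOpen U)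
    {φ ψ₁ ψ₂ : (Fin d → ℝ) → F} (hφ : ContDiffOn ℝ (⊤ : ℕ∞) φ U) (hψ₁ : IsGevreyTest s U ψ₁)
    (hψ₂ : IsGevreyTest s U ψ₂) (α : Fin d → ℕ) (x : Fin d → ℝ) :
    edist (pdm α ψ₁ x) (pdm α ψ₂ x) ≤ (gWeight s h (α + 1))⁻¹ *
      (gNorm s h q U (φ - ψ₁) + gNorm s h q U (φ - ψ₂)) * volume U ^ (1 - 1 / q.toReal) := by
  have hq0 : q ≠ 0 := (zero_lt_one.trans_le hq).ne'
  have hmeas : ∀ ψ : (Fin d → ℝ) → F, IsGevreyTest s U ψ →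
      AEStronglyMeasurable (pdm (α + 1) φ - pdm (α + 1) ψ) (volume.restrict U) := fun ψ hψ =>
    ((contDiffOn_pdm hU hφ _).sub (contDiffOn_pdm hU hψ.1.contDiffOn _)).continuousOn
      |>.aestronglyMeasurable hU.measurableSet
  rw [edist_eq_enorm_sub, ← Pi.sub_apply, ← pdm_sub hψ₁.1 hψ₂.1]
  refine (enorm_pdm_le_eLpNorm (θ := ψ₁ - ψ₂) (hψ₁.1.sub hψ₂.1) (hψ₁.2.1.sub hψ₂.2.1)
    ((tsupport_sub ψ₁ ψ₂).trans (union_subset hψ₁.2.2.1 hψ₂.2.2.1)) hq α x).trans ?_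
  rw [pdm_sub hψ₁.1 hψ₂.1, ← sub_sub_sub_cancel_left _ _ (pdm (α + 1) φ),
    add_comm (gNorm s h q U (φ - ψ₁)), mul_add]
  gcongr
  exact (eLpNorm_sub_le (hmeas ψ₂ hψ₂) (hmeas ψ₁ hψ₁) hq).trans <| add_le_add
    (eLpNorm_pdm_sub_le_gNorm hh hq0 hU hφ hψ₂.1.contDiffOn _)
    (eLpNorm_pdm_sub_le_gNorm hh hq0 hU hφ hψ₁.1.contDiffOn _)

theorem exists_lipschitzOnWith_pdm [CompleteSpace F] (hh : 0 < h) (hU : IsOpen U)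
    (hUb : Bornology.IsBounded U) (hq : 1 ≤ q) (α : Fin d → ℕ) :
    ∃ K : ℝ≥0, ∀ φ : (Fin d → ℝ) → F, MemD s h q U φ → gNorm s h q U φ ≤ 1 →
      LipschitzOnWith K (pdm α φ) U := by
  have hq0 : q ≠ 0 := (zero_lt_one.trans_le hq).ne'
  set V := volume U ^ (1 - 1 / q.toReal)
  have hV : V ≠ ⊤ := by
    refine ENNReal.rpow_ne_top_of_nonneg (sub_nonneg.2 ?_) hUb.measure_lt_top.ne
    rcases eq_or_ne q ⊤ with rfl | hqtop
    · simp
    · exact div_le_one_of_le₀ (by simpa using ENNReal.toReal_mono hqtop hq) ENNReal.toReal_nonneg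
  set w := fun γ : Fin d → ℕ => (gWeight s h γ)⁻¹
  have hw : ∀ γ, w γ ≠ ⊤ := fun γ => ENNReal.inv_ne_top.2 (gWeight_pos s hh γ).ne'
  refine ⟨∑ i, (w (α + Pi.single i 1 + 1) * 2 * V).toNNReal, fun φ hφ hφ1 => ?_⟩
  obtain ⟨ψ, hψ, he⟩ := hφ.exists_tendsto_gNorm_sub
  set e := fun n => gNorm s h q U (φ - ψ n)
  have hψU : ∀ n, ContDiffOn ℝ (⊤ : ℕ∞) (ψ n) U := fun n => (hψ n).1.contDiffOn
  have hlip : ∀ᶠ n in atTop, LipschitzWith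
      (∑ i, (w (α + Pi.single i 1 + 1) * 2 * V).toNNReal) (pdm α (ψ n)) := by
    filter_upwards [he.eventually (Iic_mem_nhds zero_lt_one)] with n hn
    refine lipschitzWith_pdm_of_eLpNorm_le (hψ n).1 (hψ n).2.1 (hψ n).2.2.1 hq α fun i => ?_
    rw [ENNReal.coe_toNNReal (ENNReal.mul_ne_top (ENNReal.mul_ne_top (hw _) (by simp)) hV),
      ← one_add_one_eq_two]
    gcongr
    exact (eLpNorm_pdm_le_gNorm_add hh hq hU hφ.1 (hψU n) _).trans (by gcongr)
  have hb : Tendsto (fun n => w (α + 1) * e n * V) atTop (𝓝 0) := by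
    simpa using ENNReal.Tendsto.mul_const (ENNReal.Tendsto.const_mul he (Or.inr (hw _))) (Or.inr hV)
  have hcauchy : ∀ x, CauchySeq fun n => pdm α (ψ n) x := fun x =>
    cauchySeq_of_edist_le_add (fun n m =>
      (edist_pdm_le_gNorm_add hh hq hU hφ.1 (hψ n) (hψ m) α x).trans_eq (by ring)) hb
  have hlim : Tendsto (fun n => eLpNorm (pdm α φ - pdm α (ψ n)) q (volume.restrict U)) atTop
      (𝓝 0) :=
    tendsto_of_tendsto_of_tendsto_of_le_of_le tendsto_const_nhds
      (by simpa using ENNReal.Tendsto.const_mul he (Or.inr (hw α))) (fun _ => zero_le)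
      fun n => eLpNorm_pdm_sub_le_gNorm hh hq0 hU hφ.1 (hψU n) α
  exact LipschitzOnWith.of_tendsto_eLpNorm hU hq0
    (fun n => (contDiff_pdm (hψ n).1 α).continuous) hlip hcauchy hlim
    (contDiffOn_pdm hU hφ.1 α).continuousOn

end Gevrey

theorem norm_neg_one_pow_mul_Dm_sub (α : Fin d → ℕ) (φ : (Fin d → ℝ) → ℂ) (x y : Fin d → ℝ) :
    ‖(-1 : ℂ) ^ mOrder α * Dm α φ x - (-1 : ℂ) ^ mOrder α * Dm α φ y‖ =
      dist (pdm α φ x) (pdm α φ y) := by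
  simp [Dm, ← mul_sub, dist_eq_norm]

theorem statement_16_general {d : ℕ} (s h : ℝ) (hh : 0 < h)
    (U : Set (Fin d → ℝ)) (hU : IsOpen U) (hUb : Bornology.IsBounded U)
    (p q : ℝ≥0∞) (hpq : 1 / p + 1 / q = 1)
    (α : Fin d → ℕ) :
    ∀ ε : ℝ, 0 < ε → ∃ Y : Set (Fin d → ℝ), Y.Finite ∧ Y ⊆ U ∧
      ∀ x ∈ U, ∃ y ∈ Y, ∀ φ : (Fin d → ℝ) → ℂ,
        MemD s h q U φ → gNorm s h q U φ ≤ 1 →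
        ‖(-1 : ℂ) ^ mOrder α * Dm α φ x - (-1 : ℂ) ^ mOrder α * Dm α φ y‖ ≤ ε := by
  intro ε hε
  have hq : 1 ≤ q := by
    have : 1 / q ≤ 1 := le_add_self.trans_eq hpq
    rwa [one_div, ENNReal.inv_le_one] at this
  obtain ⟨K, hK⟩ := exists_lipschitzOnWith_pdm (F := ℂ) (s := s) hh hU hUb hq α
  obtain ⟨Y, hYfin, hYU, hY⟩ :=
    (hUb.isCompact_closure.totallyBounded.subset subset_closure).exists_finite_forall_dist_le
      (f := fun φ : {φ // MemD s h q U φ ∧ gNorm s h q U φ ≤ 1} => pdm α φ.1)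
      (fun φ => hK φ.1 φ.2.1 φ.2.2) hε
  refine ⟨Y, hYfin, hYU, fun x hx => ?_⟩
  obtain ⟨y, hy, hxy⟩ := hY x hx
  exact ⟨y, hy, fun φ hφ hφ1 =>
    (norm_neg_one_pow_mul_Dm_sub α φ x y).trans_le (hxy ⟨φ, hφ, hφ1⟩)⟩

/-- Fix `s > 1`, a bounded open set `U ⊆ ℝ^d`, `h > 0`, `α ∈ ℕ^d` and
`1 ≤ p ≤ ∞` with conjugate exponent `q`. The set `G_α = {D^α δ_x : x ∈ U}` of the
continuous linear functionals `φ ↦ (-1)^{|α|} D^α φ(x)` on `D^{(s)}_{L^q,h}(U)` is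
precompact (totally bounded) in the dual Banach space `D'^{(s)}_{L^p,h}(U)` with its
operator norm. -/
theorem statement_16 {d : ℕ} (s h : ℝ) (hs : 1 < s) (hh : 0 < h)
    (U : Set (Fin d → ℝ)) (hU : IsOpen U) (hUb : Bornology.IsBounded U)
    (p q : ℝ≥0∞) (hp : 1 ≤ p) (hpq : 1 / p + 1 / q = 1)
    (α : Fin d → ℕ) :
    ∀ ε : ℝ, 0 < ε → ∃ Y : Set (Fin d → ℝ), Y.Finite ∧ Y ⊆ U ∧
      ∀ x ∈ U, ∃ y ∈ Y, ∀ φ : (Fin d → ℝ) → ℂ,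
        MemD s h q U φ → gNorm s h q U φ ≤ 1 →
        ‖(-1 : ℂ) ^ mOrder α * Dm α φ x - (-1 : ℂ) ^ mOrder α * Dm α φ y‖ ≤ ε :=
  statement_16_general s h hh U hU hUb p q hpq α
end
end
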